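/- The function μ_{-1}(r) = (r - sin r)/(2·sin²(r/2)) is a strictly increasing bijection from (-π, π) onto (-π/2, π/2). -/

import Mathlib

open Real

/-- `μ_{-1}(r) = (r - sin r)/(2 sin²(r/2))`; at `r = 0` this Lean expression equals `0`,
which is the limiting value, so the singularity is removable. -/
noncomputable def muNegOne (r : ℝ) : ℝ :=
  (r - Real.sin r) / (2 * Real.sin (r / 2) ^ 2)

-- key inequality: x cos x < sin x on (0, π]
lemma key_ineq {a : ℝ} (h0 : 0 < a) (hπ : a ≤ π) : a * Real.cos a < Real.sin a := by
  have hg : StrictMonoOn (fun x => Real.sin x - x * Real.cos x) (Set.Icc 0 π) := by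
    apply strictMonoOn_of_deriv_pos (convex_Icc 0 π)
    · exact (Real.continuous_sin.sub (continuous_id.mul Real.continuous_cos)).continuousOn
    · intro x hx
      rw [interior_Icc] at hx
      have hd : HasDerivAt (fun x => Real.sin x - x * Real.cos x) (x * Real.sin x) x := by
        have h1 := Real.hasDerivAt_sin x
        have h2 := (hasDerivAt_id x).mul (Real.hasDerivAt_cos x)
        have := h1.sub h2
        exact this.congr_deriv (by simp only [id]; ring)
      rw [hd.deriv]
      exact mul_pos hx.1 (Real.sin_pos_of_pos_of_lt_pi hx.1 hx.2)
  have := hg (Set.left_mem_Icc.mpr Real.pi_pos.le) ⟨h0.le, hπ⟩ h0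
  simpa using this

lemma two_sin_sq_half (r : ℝ) : 2 * Real.sin (r / 2) ^ 2 = 1 - Real.cos r := by
  have h2 : Real.cos r = 2 * Real.cos (r / 2) ^ 2 - 1 := by
    rw [← Real.cos_two_mul]
    ring_nf
  have h := Real.sin_sq_add_cos_sq (r / 2)
  linarith

lemma muNegOne_eq (r : ℝ) : muNegOne r = (r - Real.sin r) / (1 - Real.cos r) := by
  rw [muNegOne, two_sin_sq_half]

lemma cos_lt_one_of_Ioc {r : ℝ} (h : r ∈ Set.Ioc 0 π) : Real.cos r < 1 := by
  have := Real.cos_lt_cos_of_nonneg_of_le_pi le_rfl h.2 h.1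
  simpa using this

lemma muNegOne_odd (r : ℝ) : muNegOne (-r) = -muNegOne r := by
  simp [muNegOne, neg_div]
  ring_nf

lemma muNegOne_zero : muNegOne 0 = 0 := by simp [muNegOne]

lemma muNegOne_pi : muNegOne π = π / 2 := by
  rw [muNegOne_eq]
  simp
  norm_num

lemma hasDerivAt_muNegOne {r : ℝ} (h : Real.cos r ≠ 1) :
    HasDerivAt muNegOne ((2 - 2 * Real.cos r - r * Real.sin r) / (1 - Real.cos r) ^ 2) r := by
  have heq : muNegOne = fun r => (r - Real.sin r) / (1 - Real.cos r) := funext muNegOne_eq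
  rw [heq]
  have h1 : HasDerivAt (fun r : ℝ => r - Real.sin r) (1 - Real.cos r) r :=
    (hasDerivAt_id r).sub (Real.hasDerivAt_sin r)
  have h2 : HasDerivAt (fun r : ℝ => 1 - Real.cos r) (Real.sin r) r := by
    exact ((hasDerivAt_const r (1 : ℝ)).sub (Real.hasDerivAt_cos r)).congr_deriv (by ring)
  have hne : 1 - Real.cos r ≠ 0 := sub_ne_zero.mpr (Ne.symm h)
  have := h1.div h2 hne
  refine this.congr_deriv ?_
  have hsc := Real.sin_sq_add_cos_sq r
  field_simp
  nlinarith [hsc]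

lemma muNegOne_continuousOn {s : Set ℝ} (h : ∀ x ∈ s, Real.cos x < 1) :
    ContinuousOn muNegOne s := by
  show ContinuousOn (fun r => (r - Real.sin r) / (2 * Real.sin (r / 2) ^ 2)) s
  apply ContinuousOn.div
  · exact (continuous_id.sub Real.continuous_sin).continuousOn
  · exact (continuous_const.mul
      ((Real.continuous_sin.comp (continuous_id.div_const 2)).pow 2)).continuousOn
  · intro x hx
    rw [two_sin_sq_half]
    exact sub_ne_zero.mpr (Ne.symm (ne_of_lt (h x hx)))

lemma strictMonoOn_Ioc : StrictMonoOn muNegOne (Set.Ioc 0 π) := by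
  apply strictMonoOn_of_deriv_pos (convex_Ioc 0 π)
  · exact muNegOne_continuousOn fun x hx => cos_lt_one_of_Ioc hx
  · intro x hx
    rw [interior_Ioc] at hx
    obtain ⟨hx1, hx2⟩ := hx
    have hx : x ∈ Set.Ioo 0 π := ⟨hx1, hx2⟩
    have hcos : Real.cos x < 1 := cos_lt_one_of_Ioc ⟨hx.1, hx.2.le⟩
    rw [(hasDerivAt_muNegOne hcos.ne).deriv]
    apply div_pos
    · -- 2 - 2cos x - x sin x = 4 sin(x/2)(sin(x/2) - (x/2)cos(x/2)) > 0
      have ht0 : 0 < x / 2 := by linarith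
      have htπ : x / 2 ≤ π := by linarith [Real.pi_pos]
      have hkey := key_ineq ht0 htπ
      have hsinh : 0 < Real.sin (x / 2) :=
        Real.sin_pos_of_pos_of_lt_pi ht0 (by linarith [Real.pi_pos])
      have hsq := two_sin_sq_half x
      have hdouble : Real.sin x = 2 * Real.sin (x / 2) * Real.cos (x / 2) := by
        rw [← Real.sin_two_mul]
        ring_nf
      nlinarith [hkey, hsinh, hsq, hdouble]
    · exact pow_pos (by linarith) 2

lemma muNegOne_pos {r : ℝ} (h0 : 0 < r) (hπ : r < π) : 0 < muNegOne r := by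
  rw [muNegOne_eq]
  apply div_pos
  · linarith [Real.sin_lt h0]
  · linarith [cos_lt_one_of_Ioc ⟨h0, hπ.le⟩]

lemma muNegOne_lt_self {r : ℝ} (h0 : 0 < r) (hπ : r ≤ π) : muNegOne r < r := by
  rw [muNegOne_eq]
  have hc : 0 < 1 - Real.cos r := by linarith [cos_lt_one_of_Ioc ⟨h0, hπ⟩]
  rw [div_lt_iff₀ hc]
  have := key_ineq h0 hπ
  nlinarith

/-- `μ_{-1}` is a strictly increasing bijection from `(-π, π)` onto `(-π/2, π/2)`. -/
theorem muNegOne_strictMono_bijOn :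
    StrictMonoOn muNegOne (Set.Ioo (-π) π) ∧
      Set.BijOn muNegOne (Set.Ioo (-π) π) (Set.Ioo (-(π / 2)) (π / 2)) := by
  have hneg : ∀ r : ℝ, -π < r → r < 0 → muNegOne r < 0 := by
    intro r h1 h2
    have := muNegOne_pos (by linarith : (0:ℝ) < -r) (by linarith)
    have ho := muNegOne_odd (-r)
    rw [neg_neg] at ho
    linarith
  have hmono : StrictMonoOn muNegOne (Set.Ioo (-π) π) := by
    intro x hx y hy hxy
    rcases lt_trichotomy x 0 with hx0 | hx0 | hx0
    · rcases lt_trichotomy y 0 with hy0 | hy0 | hy0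
      · -- both negative: use oddness
        have h := strictMonoOn_Ioc ⟨by linarith, by linarith [hy.1]⟩
          ⟨by linarith, by linarith [hx.1]⟩ (by linarith : -y < -x)
        have hox := muNegOne_odd x
        have hoy := muNegOne_odd y
        linarith
      · rw [hy0, muNegOne_zero]; exact hneg x hx.1 hx0
      · exact lt_trans (hneg x hx.1 hx0) (muNegOne_pos hy0 hy.2)
    · subst hx0
      rw [muNegOne_zero]
      exact muNegOne_pos hxy hy.2
    · exact strictMonoOn_Ioc ⟨hx0, hx.2.le⟩ ⟨by linarith, hy.2.le⟩ hxy
  have hlt : ∀ r : ℝ, 0 < r → r < π → muNegOne r < π / 2 := by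
    intro r h0 hπ
    have := strictMonoOn_Ioc ⟨h0, hπ.le⟩ ⟨Real.pi_pos, le_rfl⟩ hπ
    rwa [muNegOne_pi] at this
  have hmaps : Set.MapsTo muNegOne (Set.Ioo (-π) π) (Set.Ioo (-(π / 2)) (π / 2)) := by
    intro r hr
    rcases lt_trichotomy r 0 with h | h | h
    · have h1 := hneg r hr.1 h
      have h2 : muNegOne (-r) < π / 2 := hlt (-r) (by linarith) (by linarith [hr.1])
      rw [muNegOne_odd] at h2
      exact ⟨by linarith, by linarith [Real.pi_pos]⟩
    · rw [h, muNegOne_zero]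
      constructor <;> linarith [Real.pi_pos]
    · exact ⟨by linarith [muNegOne_pos h hr.2, Real.pi_pos], hlt r h hr.2⟩
  have hsurj_pos : ∀ y : ℝ, 0 < y → y < π / 2 → ∃ r ∈ Set.Ioo 0 π, muNegOne r = y := by
    intro y hy0 hy1
    have hyπ : y ≤ π := by linarith [Real.pi_pos]
    have hcont : ContinuousOn muNegOne (Set.Icc y π) :=
      muNegOne_continuousOn fun x hx => cos_lt_one_of_Ioc ⟨lt_of_lt_of_le hy0 hx.1, hx.2⟩
    have hIVT := intermediate_value_Icc hyπ hcont
    have hmem : y ∈ Set.Icc (muNegOne y) (muNegOne π) := by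
      rw [muNegOne_pi]
      exact ⟨(muNegOne_lt_self hy0 hyπ).le, hy1.le⟩
    obtain ⟨r, hr, hry⟩ := hIVT hmem
    have hrπ : r ≠ π := by
      intro h
      rw [h, muNegOne_pi] at hry
      linarith
    exact ⟨r, ⟨lt_of_lt_of_le hy0 hr.1, lt_of_le_of_ne hr.2 hrπ⟩, hry⟩
  have hsurj : Set.SurjOn muNegOne (Set.Ioo (-π) π) (Set.Ioo (-(π / 2)) (π / 2)) := by
    intro y hy
    rcases lt_trichotomy y 0 with h | h | h
    · obtain ⟨r, hr, hry⟩ := hsurj_pos (-y) (by linarith) (by linarith [hy.1])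
      refine ⟨-r, ⟨by linarith [hr.2], by linarith [hr.1, Real.pi_pos]⟩, ?_⟩
      rw [muNegOne_odd, hry]; ring
    · exact ⟨0, ⟨by linarith [Real.pi_pos], Real.pi_pos⟩, by rw [muNegOne_zero, h]⟩
    · obtain ⟨r, hr, hry⟩ := hsurj_pos y h hy.2
      exact ⟨r, ⟨by linarith [hr.1, Real.pi_pos], hr.2⟩, hry⟩
  exact ⟨hmono, hmaps, hmono.injOn, hsurj⟩
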